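/- (Reduction to canonical form) Let T = {φ₁, …, φₙ, Δ} be a theory consisting of first-order sentences φ₁, …, φₙ and a definition Δ, and let P_t be a 0-ary predicate symbol occurring neither in the φᵢ nor in Δ. Then T is strongly voc(T)-equivalent to the canonical theory {P_t, Δ ∪ {P_t ← φ₁ ∧ … ∧ φₙ}}: every model of T expands uniquely to a model of the canonical theory, and every model of the canonical theory restricted to voc(T) is a model of T. -/

import Mathlib

namespace LazyMX

/-- The four truth values: true, false, unknown, inconsistent. -/
inductive TV : Type where
  | t | f | u | i
deriving DecidableEq

namespace TV

/-- The truth order `f <_t u <_t t`, `f <_t i <_t t`. -/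
def truthLe (a b : TV) : Prop := a = b ∨ a = f ∨ b = t

/-- The precision order `u <_p t <_p i`, `u <_p f <_p i`. -/
def precLe (a b : TV) : Prop := a = b ∨ a = u ∨ b = i

/-- The inverse of a truth value. -/
def inv : TV → TV
  | t => f
  | f => t
  | u => u
  | i => i

open Classical in
/-- Greatest lower bound of a set of truth values w.r.t. the truth order. -/
noncomputable def sInf (S : Set TV) : TV :=
  if f ∈ S ∨ (u ∈ S ∧ i ∈ S) then f
  else if u ∈ S then u
  else if i ∈ S then i
  else t

open Classical in
/-- Least upper bound of a set of truth values w.r.t. the truth order. -/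
noncomputable def sSup (S : Set TV) : TV :=
  if t ∈ S ∨ (u ∈ S ∧ i ∈ S) then t
  else if u ∈ S then u
  else if i ∈ S then i
  else f

/-- Minimum (meet) of two truth values under the truth order. -/
noncomputable def tmin (a b : TV) : TV := sInf {a, b}

/-- Maximum (join) of two truth values under the truth order. -/
noncomputable def tmax (a b : TV) : TV := sSup {a, b}

end TV

/-- A (function-free) vocabulary: a type of predicate symbols with arities. -/
structure Voc : Type 1 where
  Pred : Type
  arity : Pred → ℕ

/-- A domain atom `P(d₁,…,dₙ)`. -/
structure Atom (σ : Voc) (D : Type) : Type where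
  pred : σ.Pred
  args : Fin (σ.arity pred) → D

/-- A domain literal: an atom or its negation. -/
inductive Lit (σ : Voc) (D : Type) : Type where
  | pos : Atom σ D → Lit σ D
  | neg : Atom σ D → Lit σ D

namespace Lit
variable {σ : Voc} {D : Type}

def atom : Lit σ D → Atom σ D
  | pos a => a
  | neg a => a

def negate : Lit σ D → Lit σ D
  | pos a => neg a
  | neg a => pos a

def isNeg : Lit σ D → Prop
  | pos _ => False
  | neg _ => True

/-- The truth value a literal asks for: `t` for a positive, `f` for a negative literal. -/
def sign : Lit σ D → TV
  | pos _ => TV.t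
  | neg _ => TV.f

end Lit

/-- A four-valued structure with domain `D`: an assignment of truth values to domain atoms. -/
def Struct (σ : Voc) (D : Type) : Type := Atom σ D → TV

variable {σ : Voc} {D : Type}

def TwoValued (I : Struct σ D) : Prop := ∀ a, I a = TV.t ∨ I a = TV.f

def ThreeValued (I : Struct σ D) : Prop := ∀ a, I a ≠ TV.i

/-- `J` expands `I` (`I ≤_p J` pointwise). -/
def ExpandsS (I J : Struct σ D) : Prop := ∀ a, TV.precLe (I a) (J a)

/-- A set of domain literals is consistent if no atom occurs both positively and negatively. -/
def ConsistentSet (S : Set (Lit σ D)) : Prop := ∀ a, ¬ (Lit.pos a ∈ S ∧ Lit.neg a ∈ S)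

open Classical in
/-- The four-valued structure corresponding to a set of domain literals. -/
noncomputable def toStruct (S : Set (Lit σ D)) : Struct σ D := fun a =>
  if Lit.pos a ∈ S then (if Lit.neg a ∈ S then TV.i else TV.t)
  else (if Lit.neg a ∈ S then TV.f else TV.u)

/-- A literal is true in a structure. -/
def litTrue (I : Struct σ D) : Lit σ D → Prop
  | Lit.pos a => I a = TV.t
  | Lit.neg a => I a = TV.f

/-- A literal is false in a structure. -/
def litFalse (I : Struct σ D) : Lit σ D → Prop
  | Lit.pos a => I a = TV.f
  | Lit.neg a => I a = TV.t

/-- First-order formulas over domain atoms, with quantifiers ranging over explicitly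
given subsets of the domain; quantified bodies are represented as `D`-indexed families
(`b d` is the instance `φ[x↦d]`). -/
inductive Formula (σ : Voc) (D : Type) : Type where
  | atom : Atom σ D → Formula σ D
  | not : Formula σ D → Formula σ D
  | and : Formula σ D → Formula σ D → Formula σ D
  | or : Formula σ D → Formula σ D → Formula σ D
  | all : Set D → (D → Formula σ D) → Formula σ D
  | ex : Set D → (D → Formula σ D) → Formula σ D

/-- The standard four-valued truth assignment. -/
noncomputable def Formula.eval (I : Struct σ D) : Formula σ D → TV
  | Formula.atom a => I a
  | Formula.not φ => (φ.eval I).inv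
  | Formula.and φ ψ => TV.tmin (φ.eval I) (ψ.eval I)
  | Formula.or φ ψ => TV.tmax (φ.eval I) (ψ.eval I)
  | Formula.all D' b => TV.sInf { v | ∃ d ∈ D', (b d).eval I = v }
  | Formula.ex D' b => TV.sSup { v | ∃ d ∈ D', (b d).eval I = v }

/-- The predicate symbols occurring in a formula. -/
def Formula.preds : Formula σ D → Set σ.Pred
  | Formula.atom a => {a.pred}
  | Formula.not φ => φ.preds
  | Formula.and φ ψ => φ.preds ∪ ψ.preds
  | Formula.or φ ψ => φ.preds ∪ ψ.preds
  | Formula.all _ b => ⋃ d, (b d).preds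
  | Formula.ex _ b => ⋃ d, (b d).preds

/-- A rule `∀ x̄ ∈ D̄ : P(x̄) ← φ`; `body d̄` is the instantiated body `φ[x̄↦d̄]`. -/
structure Rule (σ : Voc) (D : Type) : Type where
  head : σ.Pred
  dom : Set (Fin (σ.arity head) → D)
  body : (Fin (σ.arity head) → D) → Formula σ D

/-- A definition: a set of rules. -/
abbrev Defn (σ : Voc) (D : Type) := Set (Rule σ D)

/-- The rule `r` defines the atom `a`. -/
def Rule.defines (r : Rule σ D) (a : Atom σ D) : Prop :=
  ∃ d ∈ r.dom, a = ⟨r.head, d⟩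

def definedAtom (Δ : Defn σ D) (a : Atom σ D) : Prop := ∃ r ∈ Δ, r.defines a

def openAtom (Δ : Defn σ D) (a : Atom σ D) : Prop := ¬ definedAtom Δ a

def definedLit (Δ : Defn σ D) (l : Lit σ D) : Prop := definedAtom Δ l.atom

def openLit (Δ : Defn σ D) (l : Lit σ D) : Prop := ¬ definedAtom Δ l.atom

/-- Each domain atom is defined by at most one rule. -/
def WellFormed (Δ : Defn σ D) : Prop :=
  ∀ a r₁ r₂, r₁ ∈ Δ → r₂ ∈ Δ → r₁.defines a → r₂.defines a → r₁ = r₂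

/-- The value of the body of the rule instance defining `a`, evaluated in `I`. -/
noncomputable def bodyVal (Δ : Defn σ D) (I : Struct σ D) (a : Atom σ D) : TV :=
  TV.sSup { v | ∃ r ∈ Δ, ∃ d ∈ r.dom, a = ⟨r.head, d⟩ ∧ (r.body d).eval I = v }

open Classical in
/-- Combine a lower set `x` and an upper set `y` of defined atoms with an interpretation
`Io` of the open atoms into a four-valued structure. -/
noncomputable def combine (Δ : Defn σ D) (Io : Struct σ D) (x y : Set (Atom σ D)) :
    Struct σ D := fun a =>
  if definedAtom Δ a then
    (if a ∈ x then (if a ∈ y then TV.t else TV.i) else (if a ∈ y then TV.u else TV.f))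
  else Io a

/-- Lower component of the four-valued immediate consequence operator. -/
def lowerOp (Δ : Defn σ D) (Io : Struct σ D) (x y : Set (Atom σ D)) : Set (Atom σ D) :=
  { a | definedAtom Δ a ∧
      (bodyVal Δ (combine Δ Io x y) a = TV.t ∨ bodyVal Δ (combine Δ Io x y) a = TV.i) }

/-- Upper component of the four-valued immediate consequence operator. -/
def upperOp (Δ : Defn σ D) (Io : Struct σ D) (x y : Set (Atom σ D)) : Set (Atom σ D) :=
  { a | definedAtom Δ a ∧
      (bodyVal Δ (combine Δ Io x y) a = TV.t ∨ bodyVal Δ (combine Δ Io x y) a = TV.u) }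

/-- Stable revision, lower half: least fixpoint of the lower operator with `y` fixed. -/
def stableLower (Δ : Defn σ D) (Io : Struct σ D) (y : Set (Atom σ D)) : Set (Atom σ D) :=
  ⋂₀ { x | lowerOp Δ Io x y ⊆ x }

/-- Stable revision, upper half: least fixpoint of the upper operator with `x` fixed. -/
def stableUpper (Δ : Defn σ D) (Io : Struct σ D) (x : Set (Atom σ D)) : Set (Atom σ D) :=
  ⋂₀ { y | upperOp Δ Io x y ⊆ y }

/-- Precision-prefixpoints of the stable revision operator. -/
def wfPrefixpoints (Δ : Defn σ D) (Io : Struct σ D) :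
    Set (Set (Atom σ D) × Set (Atom σ D)) :=
  { p | stableLower Δ Io p.2 ⊆ p.1 ∧ p.2 ⊆ stableUpper Δ Io p.1 }

/-- Lower half of the well-founded fixpoint (the precision-least fixpoint of stable revision). -/
def wfLower (Δ : Defn σ D) (Io : Struct σ D) : Set (Atom σ D) :=
  ⋂₀ (Prod.fst '' wfPrefixpoints Δ Io)

/-- Upper half of the well-founded fixpoint. -/
def wfUpper (Δ : Defn σ D) (Io : Struct σ D) : Set (Atom σ D) :=
  ⋃₀ (Prod.snd '' wfPrefixpoints Δ Io)

/-- The (parametrized) well-founded model `wf_Δ(Io|open(Δ))` of `Δ`; it agrees with `Io`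
on the open atoms and is the well-founded fixpoint on the defined atoms. -/
noncomputable def wfModel (Δ : Defn σ D) (Io : Struct σ D) : Struct σ D :=
  combine Δ Io (wfLower Δ Io) (wfUpper Δ Io)

/-- A two-valued structure is a model of the definition `Δ` if it equals the well-founded
model of `Δ` relative to its restriction to the open atoms. -/
def IsModelOfDef (I : Struct σ D) (Δ : Defn σ D) : Prop :=
  TwoValued I ∧ ∀ a, I a = wfModel Δ I a

/-- `Δ` is total: the well-founded model is two-valued for every two-valued
interpretation of the open atoms. -/
def IsTotalDef (Δ : Defn σ D) : Prop :=
  ∀ Io : Struct σ D, TwoValued Io → TwoValued (wfModel Δ Io)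

/-- A model of the canonical theory `{P_t, Δ}`. -/
def IsModelOfTheory (I : Struct σ D) (pt : Atom σ D) (Δ : Defn σ D) : Prop :=
  IsModelOfDef I Δ ∧ I pt = TV.t

/-- A direct justification for a defined literal `l`: a consistent nonempty set `S` of
domain literals making the body of the rule instance defining `l.atom` true
(for positive `l`) resp. false (for negative `l`). -/
def IsDirectJust (Δ : Defn σ D) (l : Lit σ D) (S : Set (Lit σ D)) : Prop :=
  ConsistentSet S ∧ S.Nonempty ∧
    ∃ r ∈ Δ, ∃ d ∈ r.dom, l.atom = ⟨r.head, d⟩ ∧ (r.body d).eval (toStruct S) = l.sign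

/-- A justification over `Δ`: a graph assigning to each literal either no children or a
direct justification. -/
def IsJustification (Δ : Defn σ D) (J : Lit σ D → Set (Lit σ D)) : Prop :=
  ∀ l, J l = ∅ ∨ IsDirectJust Δ l (J l)

/-- Reachability in the justification graph. -/
def Reach (J : Lit σ D → Set (Lit σ D)) : Lit σ D → Lit σ D → Prop :=
  Relation.ReflTransGen (fun x y => y ∈ J x)

/-- The nodes of the subgraph `J_L` reachable from the set `L` of literals. -/
def reachSet (J : Lit σ D → Set (Lit σ D)) (L : Set (Lit σ D)) : Set (Lit σ D) :=
  { x | ∃ l ∈ L, Reach J l x }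

/-- `J` is total for `L`: `J` is defined in every defined literal reachable from `L`. -/
def TotalFor (Δ : Defn σ D) (J : Lit σ D → Set (Lit σ D)) (L : Set (Lit σ D)) : Prop :=
  ∀ x ∈ reachSet J L, definedLit Δ x → J x ≠ ∅

/-- An infinite path in the subgraph `J_l`. -/
def IsInfPathFrom (J : Lit σ D → Set (Lit σ D)) (l : Lit σ D) (p : ℕ → Lit σ D) : Prop :=
  Reach J l (p 0) ∧ ∀ n, p (n + 1) ∈ J (p n)

/-- `l` is well-founded in `J`: every infinite path in `J_l` is negative. -/
def WellFoundedIn (J : Lit σ D → Set (Lit σ D)) (l : Lit σ D) : Prop :=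
  ∀ p : ℕ → Lit σ D, IsInfPathFrom J l p → ∀ n, (p n).isNeg

/-- `J` justifies `L`: `J_L` is total for `L`, every literal of `L` is well-founded,
and the set of literals in `J_L` is consistent. -/
def Justifies (Δ : Defn σ D) (J : Lit σ D → Set (Lit σ D)) (L : Set (Lit σ D)) : Prop :=
  TotalFor Δ J L ∧ (∀ l ∈ L, WellFoundedIn J l) ∧ ConsistentSet (reachSet J L)

/-- The part of `J` on the nodes `N` is consistent with the literal-set structure `I`:
`I` is consistent and no literal of `N` in which `J` is defined is false in `I`. -/
def ConsistentWithOn (J : Lit σ D → Set (Lit σ D)) (N I : Set (Lit σ D)) : Prop :=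
  ConsistentSet I ∧ ∀ l ∈ N, J l ≠ ∅ → l.negate ∉ I

/-- The predicate symbols occurring in a definition. -/
def vocDef (Δ : Defn σ D) : Set σ.Pred :=
  { P | ∃ r ∈ Δ, r.head = P } ∪ { P | ∃ r ∈ Δ, ∃ d ∈ r.dom, P ∈ (r.body d).preds }

open Classical in
/-- Restriction of a structure to the symbols in `s` (everything else becomes unknown). -/
noncomputable def restrictP (s : Set σ.Pred) (I : Struct σ D) : Struct σ D :=
  fun a => if a.pred ∈ s then I a else TV.u

open Classical in
/-- Restriction of a structure to a set of atoms (everything else becomes unknown). -/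
noncomputable def restrictA (A : Set (Atom σ D)) (I : Struct σ D) : Struct σ D :=
  fun a => if a ∈ A then I a else TV.u

/-- Strong `s`-equivalence of two classes of models: each model of one, restricted to `s`,
expands in a unique way to a model of the other. -/
def StronglyEquivModels (s : Set σ.Pred) (M M' : Set (Struct σ D)) : Prop :=
  (∀ I ∈ M, ∃! I', I' ∈ M' ∧ ExpandsS (restrictP s I) I') ∧
  (∀ I' ∈ M', ∃! I, I ∈ M ∧ ExpandsS (restrictP s I') I)

/-- Strong `s`-equivalence of two definitions. -/
def StronglyEquivDef (s : Set σ.Pred) (Δ₁ Δ₂ : Defn σ D) : Prop :=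
  StronglyEquivModels s { I | IsModelOfDef I Δ₁ } { I | IsModelOfDef I Δ₂ }

/-- A (two-valued) structure expands a literal-set structure. -/
def expandsLit (Iin : Set (Lit σ D)) (M : Struct σ D) : Prop := ∀ l ∈ Iin, litTrue M l

/-- Strong `s`-equivalence of two definitions in the input structure `Iin`. -/
def StronglyEquivDefIn (s : Set σ.Pred) (Iin : Set (Lit σ D)) (Δ₁ Δ₂ : Defn σ D) : Prop :=
  StronglyEquivModels s { I | IsModelOfDef I Δ₁ ∧ expandsLit Iin I }
    { I | IsModelOfDef I Δ₂ ∧ expandsLit Iin I }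

/-- The domain atom of a 0-ary predicate symbol. -/
def ptAtom (σ : Voc) (D : Type) (Pt : σ.Pred) (h : σ.arity Pt = 0) : Atom σ D :=
  ⟨Pt, fun j => Fin.elim0 (h ▸ j)⟩

/-- An acceptable state `⟨Δg, Δd, J, I⟩` for the canonical theory `{P_t, Δ}` with input
structure `Iin`. -/
structure AcceptableState (Δ : Defn σ D) (Iin : Set (Lit σ D))
    (Δg Δd : Defn σ D) (J : Lit σ D → Set (Lit σ D)) (I : Set (Lit σ D)) : Prop where
  wf_gd : WellFormed (Δg ∪ Δd)
  wf_g : WellFormed Δg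
  wf_d : WellFormed Δd
  total_gd : IsTotalDef (Δg ∪ Δd)
  total_g : IsTotalDef Δg
  total_d : IsTotalDef Δd
  equiv : StronglyEquivDef (vocDef Δ) (Δg ∪ Δd) Δ
  disj : ∀ a, ¬ (definedAtom Δg a ∧ definedAtom Δd a)
  just : IsJustification (Δg ∪ Δd) J
  expands : Iin ⊆ I
  justified : Justifies (Δg ∪ Δd) J { l | l ∈ I ∧ definedLit Δd l }
  consistentWith : ConsistentWithOn J (reachSet J { l | l ∈ I ∧ definedLit Δd l }) I

/-- A default acceptable state. -/
structure DefaultAcceptableState (Δ : Defn σ D) (Iin : Set (Lit σ D))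
    (Δg Δd : Defn σ D) (J : Lit σ D → Set (Lit σ D)) (I : Set (Lit σ D))
    extends AcceptableState Δ Iin Δg Δd J I : Prop where
  dj_open_or_defd : ∀ l l', l' ∈ J l → openLit (Δg ∪ Δd) l' ∨ definedLit Δd l'
  justifies_defined : Justifies (Δg ∪ Δd) J { l | J l ≠ ∅ }

/-- A model of a theory (list of sentences plus a definition) relative to a vocabulary `s`:
two-valued on `s`, unknown outside `s`, satisfying all sentences and the definition. -/
def IsModelOfTOn (s : Set σ.Pred) (M : Struct σ D) (φs : List (Formula σ D))
    (Δ : Defn σ D) : Prop :=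
  (∀ a : Atom σ D, a.pred ∈ s → M a = TV.t ∨ M a = TV.f) ∧
  (∀ a : Atom σ D, a.pred ∉ s → M a = TV.u) ∧
  (∀ φ ∈ φs, φ.eval M = TV.t) ∧
  (∀ a : Atom σ D, a.pred ∈ s → M a = wfModel Δ M a)

/-- A model of a canonical theory `{pt, Δ}` relative to a vocabulary `s`. -/
def IsModelOfCanonOn (s : Set σ.Pred) (M : Struct σ D) (pt : Atom σ D)
    (Δ : Defn σ D) : Prop :=
  (∀ a : Atom σ D, a.pred ∈ s → M a = TV.t ∨ M a = TV.f) ∧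
  (∀ a : Atom σ D, a.pred ∉ s → M a = TV.u) ∧
  M pt = TV.t ∧
  (∀ a : Atom σ D, a.pred ∈ s → M a = wfModel Δ M a)

/-- A model of a definition relative to a vocabulary `s`: two-valued on `s`,
unknown outside `s`, and satisfying the well-founded-model equation on `s`. -/
def IsModelOfDefOn (s : Set σ.Pred) (I : Struct σ D) (Δ : Defn σ D) : Prop :=
  (∀ a : Atom σ D, a.pred ∈ s → I a = TV.t ∨ I a = TV.f) ∧
  (∀ a : Atom σ D, a.pred ∉ s → I a = TV.u) ∧
  (∀ a : Atom σ D, a.pred ∈ s → I a = wfModel Δ I a)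

/-!
The rule `P_t ← φ₁ ∧ … ∧ φₙ` sits on top of `Δ`: its head is fresh, no rule of `Δ` mentions
`P_t`, and its own body does not depend on `P_t` (the conjunction ends in the vacuous
`∀ x ∈ ∅, P_t`). Hence the well-founded fixpoint of the extended definition is that of `Δ`,
together with the `P_t`-atoms valued by the body in the well-founded model of `Δ`. A model of
`T` therefore becomes a model of the canonical theory by making `P_t` true, and in a model of
the canonical theory `P_t` is true exactly because all the `φᵢ` hold.
-/

namespace TV

instance : Fintype TV := ⟨{t, f, u, i}, fun v => by cases v <;> decide⟩

instance (a b : TV) : Decidable (precLe a b) := by unfold precLe; infer_instance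

/-- A truth value is the pair of bits `lo` and `hi`; `combine` sets them to membership of an
atom in the lower and in the upper set. -/
def lo : TV → Bool
  | t | i => true
  | f | u => false

def hi : TV → Bool
  | t | u => true
  | f | i => false

theorem ext_lo_hi : ∀ {v w : TV}, lo v = lo w → hi v = hi w → v = w := by decide

theorem lo_iff : ∀ v : TV, lo v ↔ v = t ∨ v = i := by decide

theorem hi_iff : ∀ v : TV, hi v ↔ v = t ∨ v = u := by decide

theorem precLe_iff : ∀ a b : TV, precLe a b ↔ (lo a → lo b) ∧ (hi b → hi a) := by decide

theorem lo_mono {a b : TV} (h : precLe a b) : lo a → lo b := ((precLe_iff a b).1 h).1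

theorem hi_anti {a b : TV} (h : precLe a b) : hi b → hi a := ((precLe_iff a b).1 h).2

theorem precLe_refl : ∀ v : TV, precLe v v := by decide

theorem precLe_inv : ∀ {a b : TV}, precLe a b → precLe (inv a) (inv b) := by decide

theorem eq_of_precLe_of_two_valued : ∀ {a b : TV}, (a = t ∨ a = f) → (b = t ∨ b = f) →
    precLe a b → b = a := by decide

theorem forall_tv {p : TV → Prop} : (∀ v, p v) ↔ p t ∧ p f ∧ p u ∧ p i :=
  ⟨fun h => ⟨h t, h f, h u, h i⟩, fun ⟨ht, hf, hu, hi⟩ v => by cases v <;> assumption⟩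

theorem exists_tv {p : TV → Prop} : (∃ v, p v) ↔ p t ∨ p f ∨ p u ∨ p i :=
  ⟨fun ⟨v, hv⟩ => by cases v <;> tauto, by rintro (h | h | h | h) <;> exact ⟨_, h⟩⟩

theorem lo_sInf {S : Set TV} : lo (sInf S) ↔ ∀ v ∈ S, lo v := by
  unfold sInf
  split_ifs <;> simp only [forall_tv, lo] <;> tauto

theorem hi_sInf {S : Set TV} : hi (sInf S) ↔ ∀ v ∈ S, hi v := by
  unfold sInf
  split_ifs <;> simp only [forall_tv, hi] <;> tauto

theorem lo_sSup {S : Set TV} : lo (sSup S) ↔ ∃ v ∈ S, lo v := by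
  unfold sSup
  split_ifs <;> simp only [exists_tv, lo] <;> tauto

theorem hi_sSup {S : Set TV} : hi (sSup S) ↔ ∃ v ∈ S, hi v := by
  unfold sSup
  split_ifs <;> simp only [exists_tv, hi] <;> tauto

theorem lo_tmin {a b : TV} : lo (tmin a b) ↔ lo a ∧ lo b := by simp [tmin, lo_sInf]

theorem hi_tmin {a b : TV} : hi (tmin a b) ↔ hi a ∧ hi b := by simp [tmin, hi_sInf]

theorem lo_tmax {a b : TV} : lo (tmax a b) ↔ lo a ∨ lo b := by simp [tmax, lo_sSup]

theorem hi_tmax {a b : TV} : hi (tmax a b) ↔ hi a ∨ hi b := by simp [tmax, hi_sSup]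

theorem tmin_eq_t_iff {a b : TV} : tmin a b = t ↔ a = t ∧ b = t := by
  cases a <;> cases b <;> simp [tmin, sInf]

theorem sSup_singleton (v : TV) : sSup {v} = v := by cases v <;> simp [sSup]

theorem sInf_empty : sInf ∅ = t := by simp [sInf]

end TV

namespace Formula

variable {I J : Struct σ D} {P : σ.Pred}

theorem eval_mono (h : ExpandsS I J) (φ : Formula σ D) : TV.precLe (φ.eval I) (φ.eval J) := by
  induction φ with
  | atom a => exact h a
  | not φ ih => exact TV.precLe_inv ih
  | and φ ψ ihφ ihψ =>
    rw [TV.precLe_iff] at *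
    simp only [eval, TV.lo_tmin, TV.hi_tmin]
    tauto
  | or φ ψ ihφ ihψ =>
    rw [TV.precLe_iff] at *
    simp only [eval, TV.lo_tmax, TV.hi_tmax]
    tauto
  | all D' b ih =>
    simp only [TV.precLe_iff, eval, TV.lo_sInf, TV.hi_sInf, Set.mem_ofPred_eq,
      forall_exists_index, and_imp, forall_apply_eq_imp_iff₂] at *
    exact ⟨fun H d hd => (ih d).1 (H d hd), fun H d hd => (ih d).2 (H d hd)⟩
  | ex D' b ih =>
    simp only [TV.precLe_iff, eval, TV.lo_sSup, TV.hi_sSup, Set.mem_ofPred_eq,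
      exists_exists_and_eq_and] at *
    exact ⟨fun ⟨d, hd, H⟩ => ⟨d, hd, (ih d).1 H⟩, fun ⟨d, hd, H⟩ => ⟨d, hd, (ih d).2 H⟩⟩

theorem eval_congr (φ : Formula σ D) (h : Set.EqOn I J {a | a.pred ∈ φ.preds}) :
    φ.eval I = φ.eval J := by
  induction φ with
  | atom a => exact h rfl
  | not φ ih => simp only [eval, ih h]
  | and φ ψ ihφ ihψ | or φ ψ ihφ ihψ =>
    simp only [eval, ihφ (h.mono fun _ => Or.inl), ihψ (h.mono fun _ => Or.inr)]
  | all D' b ih | ex D' b ih =>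
    have hb d := ih d <| h.mono fun a (ha : a.pred ∈ (b d).preds) =>
      (Set.mem_iUnion_of_mem d ha : a.pred ∈ ⋃ d, (b d).preds)
    simp only [eval, hb]

theorem eval_all_empty (b : D → Formula σ D) : (all ∅ b).eval I = TV.t := by
  simp [eval, TV.sInf_empty]

theorem eval_foldr_and_eq_t_iff {b₀ : Formula σ D} (h₀ : ∀ I, b₀.eval I = TV.t)
    (φs : List (Formula σ D)) :
    (φs.foldr and b₀).eval I = TV.t ↔ ∀ φ ∈ φs, φ.eval I = TV.t := by
  induction φs with
  | nil => simp [h₀]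
  | cons φ φs ih => simp [eval, TV.tmin_eq_t_iff, ih]

/-- A semantic notion: the conjunction in the canonical rule mentions `P` syntactically, in its
vacuous base case `∀ x ∈ ∅, P`. -/
def IndepOf (φ : Formula σ D) (P : σ.Pred) : Prop :=
  ∀ I J : Struct σ D, Set.EqOn I J {a | a.pred ≠ P} → φ.eval I = φ.eval J

theorem indepOf_of_not_mem_preds {φ : Formula σ D} (h : P ∉ φ.preds) : φ.IndepOf P :=
  fun _ _ hIJ => eval_congr φ <| hIJ.mono fun a (ha : a.pred ∈ φ.preds) (hP : a.pred = P) =>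
    h (hP ▸ ha)

theorem indepOf_all_empty (b : D → Formula σ D) : (all ∅ b).IndepOf P :=
  fun _ _ _ => by rw [eval_all_empty, eval_all_empty]

theorem indepOf_foldr_and {b₀ : Formula σ D} (h₀ : b₀.IndepOf P) {φs : List (Formula σ D)}
    (hφs : ∀ φ ∈ φs, φ.IndepOf P) : (φs.foldr and b₀).IndepOf P := by
  induction φs with
  | nil => exact h₀
  | cons φ φs ih =>
    intro I J hIJ
    simp only [List.foldr_cons, eval]
    rw [hφs φ List.mem_cons_self I J hIJ,
      ih (fun ψ hψ => hφs ψ (List.mem_cons_of_mem φ hψ)) I J hIJ]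

end Formula

section Operators

variable {Δ : Defn σ D} {Io : Struct σ D} {x x' y y' : Set (Atom σ D)} {a : Atom σ D}

theorem bodyVal_mono {I J : Struct σ D} (h : ExpandsS I J) (Δ : Defn σ D) (a : Atom σ D) :
    TV.precLe (bodyVal Δ I a) (bodyVal Δ J a) := by
  simp only [TV.precLe_iff, bodyVal, TV.lo_sSup, TV.hi_sSup, Set.mem_ofPred_eq]
  constructor
  · rintro ⟨_, ⟨r, hr, d, hd, had, rfl⟩, hv⟩
    exact ⟨_, ⟨r, hr, d, hd, had, rfl⟩, TV.lo_mono (Formula.eval_mono h _) hv⟩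
  · rintro ⟨_, ⟨r, hr, d, hd, had, rfl⟩, hv⟩
    exact ⟨_, ⟨r, hr, d, hd, had, rfl⟩, TV.hi_anti (Formula.eval_mono h _) hv⟩

theorem lo_combine (ha : definedAtom Δ a) : TV.lo (combine Δ Io x y a) ↔ a ∈ x := by
  unfold combine
  split_ifs <;> simp_all [TV.lo]

theorem hi_combine (ha : definedAtom Δ a) : TV.hi (combine Δ Io x y a) ↔ a ∈ y := by
  unfold combine
  split_ifs <;> simp_all [TV.hi]

theorem combine_of_not_definedAtom (ha : ¬ definedAtom Δ a) : combine Δ Io x y a = Io a :=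
  if_neg ha

theorem combine_mono (hx : x ⊆ x') (hy : y' ⊆ y) :
    ExpandsS (combine Δ Io x y) (combine Δ Io x' y') := by
  intro a
  by_cases ha : definedAtom Δ a
  · rw [TV.precLe_iff, lo_combine ha, lo_combine ha, hi_combine ha, hi_combine ha]
    exact ⟨@hx a, @hy a⟩
  · rw [combine_of_not_definedAtom ha, combine_of_not_definedAtom ha]
    exact TV.precLe_refl _

theorem combine_congr_definedAtom (hx : ∀ a, definedAtom Δ a → (a ∈ x ↔ a ∈ x'))
    (hy : ∀ a, definedAtom Δ a → (a ∈ y ↔ a ∈ y')) :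
    combine Δ Io x y = combine Δ Io x' y' := by
  funext a
  by_cases ha : definedAtom Δ a
  · exact TV.ext_lo_hi (Bool.eq_iff_iff.2 (by rw [lo_combine ha, lo_combine ha, hx a ha]))
      (Bool.eq_iff_iff.2 (by rw [hi_combine ha, hi_combine ha, hy a ha]))
  · rw [combine_of_not_definedAtom ha, combine_of_not_definedAtom ha]

theorem mem_lowerOp :
    a ∈ lowerOp Δ Io x y ↔ definedAtom Δ a ∧ TV.lo (bodyVal Δ (combine Δ Io x y) a) := by
  rw [TV.lo_iff]; rfl

theorem mem_upperOp :
    a ∈ upperOp Δ Io x y ↔ definedAtom Δ a ∧ TV.hi (bodyVal Δ (combine Δ Io x y) a) := by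
  rw [TV.hi_iff]; rfl

theorem lowerOp_mono (hx : x ⊆ x') (hy : y' ⊆ y) : lowerOp Δ Io x y ⊆ lowerOp Δ Io x' y' :=
  fun a ha => by
    rw [mem_lowerOp] at ha ⊢
    exact ⟨ha.1, TV.lo_mono (bodyVal_mono (combine_mono hx hy) Δ a) ha.2⟩

theorem upperOp_mono (hx : x ⊆ x') (hy : y' ⊆ y) : upperOp Δ Io x' y' ⊆ upperOp Δ Io x y :=
  fun a ha => by
    rw [mem_upperOp] at ha ⊢
    exact ⟨ha.1, TV.hi_anti (bodyVal_mono (combine_mono hx hy) Δ a) ha.2⟩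

theorem lowerOp_congr_definedAtom (hx : ∀ a, definedAtom Δ a → (a ∈ x ↔ a ∈ x'))
    (hy : ∀ a, definedAtom Δ a → (a ∈ y ↔ a ∈ y')) :
    lowerOp Δ Io x y = lowerOp Δ Io x' y' := by
  simp only [lowerOp, combine_congr_definedAtom hx hy]

theorem upperOp_congr_definedAtom (hx : ∀ a, definedAtom Δ a → (a ∈ x ↔ a ∈ x'))
    (hy : ∀ a, definedAtom Δ a → (a ∈ y ↔ a ∈ y')) :
    upperOp Δ Io x y = upperOp Δ Io x' y' := by
  simp only [upperOp, combine_congr_definedAtom hx hy]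

end Operators

section StableRevision

variable {Δ : Defn σ D} {Io : Struct σ D} {x x' y y' : Set (Atom σ D)}

theorem stableLower_subset (h : lowerOp Δ Io x y ⊆ x) : stableLower Δ Io y ⊆ x :=
  Set.sInter_subset_of_mem h

theorem stableUpper_subset (h : upperOp Δ Io x y ⊆ y) : stableUpper Δ Io x ⊆ y :=
  Set.sInter_subset_of_mem h

theorem lowerOp_stableLower : lowerOp Δ Io (stableLower Δ Io y) y = stableLower Δ Io y :=
  OrderHom.map_lfp ⟨(lowerOp Δ Io · y), fun _ _ h => lowerOp_mono h subset_rfl⟩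

theorem upperOp_stableUpper : upperOp Δ Io x (stableUpper Δ Io x) = stableUpper Δ Io x :=
  OrderHom.map_lfp ⟨(upperOp Δ Io x ·), fun _ _ h => upperOp_mono subset_rfl h⟩

theorem stableLower_subset_definedAtom : stableLower Δ Io y ⊆ {a | definedAtom Δ a} := by
  rw [← lowerOp_stableLower]
  exact fun _ ha => ha.1

theorem stableUpper_subset_definedAtom : stableUpper Δ Io x ⊆ {a | definedAtom Δ a} := by
  rw [← upperOp_stableUpper]
  exact fun _ ha => ha.1

theorem stableLower_anti (h : y ⊆ y') : stableLower Δ Io y' ⊆ stableLower Δ Io y :=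
  Set.sInter_subset_sInter fun _ hx => (lowerOp_mono subset_rfl h).trans hx

theorem stableUpper_anti (h : x ⊆ x') : stableUpper Δ Io x' ⊆ stableUpper Δ Io x :=
  Set.sInter_subset_sInter fun _ hy => (upperOp_mono h subset_rfl).trans hy

theorem stableLower_congr (hy : ∀ a, definedAtom Δ a → (a ∈ y ↔ a ∈ y')) :
    stableLower Δ Io y = stableLower Δ Io y' := by
  simp only [stableLower, lowerOp_congr_definedAtom (fun _ _ => Iff.rfl) hy]

theorem stableUpper_congr (hx : ∀ a, definedAtom Δ a → (a ∈ x ↔ a ∈ x')) :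
    stableUpper Δ Io x = stableUpper Δ Io x' := by
  simp only [stableUpper, upperOp_congr_definedAtom hx (fun _ _ => Iff.rfl)]

end StableRevision

section WellFounded

variable {Δ : Defn σ D} {Io : Struct σ D} {x y : Set (Atom σ D)}

theorem wfLower_subset {p : Set (Atom σ D) × Set (Atom σ D)} (hp : p ∈ wfPrefixpoints Δ Io) :
    wfLower Δ Io ⊆ p.1 :=
  Set.sInter_subset_of_mem ⟨p, hp, rfl⟩

theorem subset_wfUpper {p : Set (Atom σ D) × Set (Atom σ D)} (hp : p ∈ wfPrefixpoints Δ Io) :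
    p.2 ⊆ wfUpper Δ Io :=
  Set.subset_sUnion_of_mem ⟨p, hp, rfl⟩

theorem wf_mem_wfPrefixpoints : (wfLower Δ Io, wfUpper Δ Io) ∈ wfPrefixpoints Δ Io := by
  constructor
  · refine Set.subset_sInter ?_
    rintro _ ⟨p, hp, rfl⟩
    exact (stableLower_anti (subset_wfUpper hp)).trans hp.1
  · refine Set.sUnion_subset ?_
    rintro _ ⟨p, hp, rfl⟩
    exact hp.2.trans (stableUpper_anti (wfLower_subset hp))

theorem stable_wf_mem_wfPrefixpoints :
    (stableLower Δ Io (wfUpper Δ Io), stableUpper Δ Io (wfLower Δ Io)) ∈ wfPrefixpoints Δ Io :=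
  ⟨stableLower_anti wf_mem_wfPrefixpoints.2, stableUpper_anti wf_mem_wfPrefixpoints.1⟩

theorem stableLower_wfUpper : stableLower Δ Io (wfUpper Δ Io) = wfLower Δ Io :=
  wf_mem_wfPrefixpoints.1.antisymm (wfLower_subset stable_wf_mem_wfPrefixpoints)

theorem stableUpper_wfLower : stableUpper Δ Io (wfLower Δ Io) = wfUpper Δ Io :=
  (subset_wfUpper stable_wf_mem_wfPrefixpoints).antisymm wf_mem_wfPrefixpoints.2

theorem wfLower_subset_definedAtom : wfLower Δ Io ⊆ {a | definedAtom Δ a} :=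
  stableLower_wfUpper (Δ := Δ) ▸ stableLower_subset_definedAtom

theorem wfUpper_subset_definedAtom : wfUpper Δ Io ⊆ {a | definedAtom Δ a} :=
  stableUpper_wfLower (Δ := Δ) ▸ stableUpper_subset_definedAtom

theorem wf_eq_of_isLeast (hmem : (x, y) ∈ wfPrefixpoints Δ Io)
    (hle : ∀ p ∈ wfPrefixpoints Δ Io, x ⊆ p.1 ∧ p.2 ⊆ y) :
    wfLower Δ Io = x ∧ wfUpper Δ Io = y := by
  refine ⟨(wfLower_subset hmem).antisymm ?_, (Set.sUnion_subset ?_).antisymm (subset_wfUpper hmem)⟩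
  · exact Set.subset_sInter fun _ ⟨p, hp, hp1⟩ => hp1 ▸ (hle p hp).1
  · exact fun _ ⟨p, hp, hp2⟩ => hp2 ▸ (hle p hp).2

theorem wfModel_of_not_definedAtom {a : Atom σ D} (ha : ¬ definedAtom Δ a) :
    wfModel Δ Io a = Io a :=
  combine_of_not_definedAtom ha

end WellFounded

section FreshPredicate

variable {Δ : Defn σ D} {Pt : σ.Pred} {Io Io' : Struct σ D} {x y : Set (Atom σ D)}

theorem pred_mem_vocDef {a : Atom σ D} (ha : definedAtom Δ a) : a.pred ∈ vocDef Δ := by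
  obtain ⟨r, hr, d, -, rfl⟩ := ha
  exact Or.inl ⟨r, hr, rfl⟩

theorem pred_ne_of_definedAtom (hfresh : Pt ∉ vocDef Δ) {a : Atom σ D}
    (ha : definedAtom Δ a) : a.pred ≠ Pt :=
  fun h => hfresh (h ▸ pred_mem_vocDef ha)

theorem mem_union_pred_iff (hfresh : Pt ∉ vocDef Δ) (x : Set (Atom σ D)) (c : Prop) :
    ∀ a, definedAtom Δ a → (a ∈ x ∪ {a | a.pred = Pt ∧ c} ↔ a ∈ x) :=
  fun _ ha => or_iff_left fun h => pred_ne_of_definedAtom hfresh ha h.1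

theorem bodyVal_congr (hfresh : Pt ∉ vocDef Δ) {I J : Struct σ D}
    (h : Set.EqOn I J {a | a.pred ≠ Pt}) (a : Atom σ D) :
    bodyVal Δ I a = bodyVal Δ J a := by
  have hbody : ∀ r ∈ Δ, ∀ d ∈ r.dom, (r.body d).eval I = (r.body d).eval J :=
    fun r hr d hd => Formula.indepOf_of_not_mem_preds
      (fun hP => hfresh (Or.inr ⟨r, hr, d, hd, hP⟩)) I J h
  unfold bodyVal
  congr 1
  ext v
  constructor <;> rintro ⟨r, hr, d, hd, had, rfl⟩
  exacts [⟨r, hr, d, hd, had, (hbody r hr d hd).symm⟩, ⟨r, hr, d, hd, had, hbody r hr d hd⟩]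

theorem combine_eqOn_of_eqOn (h : Set.EqOn Io Io' {a | a.pred ≠ Pt}) :
    Set.EqOn (combine Δ Io x y) (combine Δ Io' x y) {a | a.pred ≠ Pt} := by
  intro a ha
  unfold combine
  split_ifs <;> first | rfl | exact h ha

theorem wfModel_congr (hfresh : Pt ∉ vocDef Δ) (h : Set.EqOn Io Io' {a | a.pred ≠ Pt}) :
    Set.EqOn (wfModel Δ Io) (wfModel Δ Io') {a | a.pred ≠ Pt} := by
  have hl : lowerOp Δ Io = lowerOp Δ Io' := by
    funext x y
    simp only [lowerOp, bodyVal_congr hfresh (combine_eqOn_of_eqOn (x := x) (y := y) h)]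
  have hu : upperOp Δ Io = upperOp Δ Io' := by
    funext x y
    simp only [upperOp, bodyVal_congr hfresh (combine_eqOn_of_eqOn (x := x) (y := y) h)]
  have hP : wfPrefixpoints Δ Io = wfPrefixpoints Δ Io' := by
    simp only [wfPrefixpoints, stableLower, stableUpper, hl, hu]
  unfold wfModel wfLower wfUpper
  rw [hP]
  exact combine_eqOn_of_eqOn h

end FreshPredicate

def Rule.constBody (P : σ.Pred) (B : Formula σ D) : Rule σ D := ⟨P, Set.univ, fun _ => B⟩

theorem Atom.exists_eq_mk_iff {a : Atom σ D} {P : σ.Pred} :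
    (∃ d, a = ⟨P, d⟩) ↔ a.pred = P := by
  constructor
  · rintro ⟨d, rfl⟩
    rfl
  · obtain ⟨p, d⟩ := a
    rintro rfl
    exact ⟨d, rfl⟩

section UnionConstBody

variable {Δ : Defn σ D} {Pt : σ.Pred} {B : Formula σ D} {Io : Struct σ D}
  {x y : Set (Atom σ D)} {a : Atom σ D}

theorem definedAtom_union_constBody :
    definedAtom (Δ ∪ {Rule.constBody Pt B}) a ↔ definedAtom Δ a ∨ a.pred = Pt := by
  simp only [definedAtom, Set.mem_union, Set.mem_singleton_iff, or_and_right, exists_or,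
    exists_eq_left, Rule.defines, Rule.constBody, Set.mem_univ, true_and,
    Atom.exists_eq_mk_iff]

theorem bodyVal_union_constBody_of_eq (hfresh : Pt ∉ vocDef Δ) (I : Struct σ D)
    (ha : a.pred = Pt) : bodyVal (Δ ∪ {Rule.constBody Pt B}) I a = B.eval I := by
  unfold bodyVal
  convert TV.sSup_singleton (B.eval I) using 2
  ext v
  constructor
  · rintro ⟨r, hr | rfl, d, hd, rfl, rfl⟩
    · exact absurd ha (pred_ne_of_definedAtom hfresh ⟨r, hr, d, hd, rfl⟩)
    · rfl
  · rintro rfl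
    obtain ⟨d, rfl⟩ := Atom.exists_eq_mk_iff.2 ha
    exact ⟨_, Or.inr rfl, d, trivial, rfl, rfl⟩

theorem bodyVal_union_constBody_of_ne (I : Struct σ D) (ha : a.pred ≠ Pt) :
    bodyVal (Δ ∪ {Rule.constBody Pt B}) I a = bodyVal Δ I a := by
  unfold bodyVal
  congr 1
  ext v
  constructor
  · rintro ⟨r, hr | rfl, d, hd, had, rfl⟩
    exacts [⟨r, hr, d, hd, had, rfl⟩, absurd (congrArg Atom.pred had) ha]
  · rintro ⟨r, hr, d, hd, had, rfl⟩
    exact ⟨r, Or.inl hr, d, hd, had, rfl⟩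

theorem combine_union_constBody_eqOn :
    Set.EqOn (combine (Δ ∪ {Rule.constBody Pt B}) Io x y) (combine Δ Io x y)
      {a | a.pred ≠ Pt} := by
  intro a ha
  have hdef : definedAtom (Δ ∪ {Rule.constBody Pt B}) a ↔ definedAtom Δ a :=
    definedAtom_union_constBody.trans (or_iff_left ha)
  by_cases hd : definedAtom Δ a
  · simp only [combine, hd, hdef.2 hd, if_true]
  · simp only [combine, hd, mt hdef.1 hd, if_false]

theorem lowerOp_union_constBody (hfresh : Pt ∉ vocDef Δ) (hB : B.IndepOf Pt) :
    lowerOp (Δ ∪ {Rule.constBody Pt B}) Io x y =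
      lowerOp Δ Io x y ∪ {a | a.pred = Pt ∧ TV.lo (B.eval (combine Δ Io x y))} := by
  ext a
  by_cases ha : a.pred = Pt
  · have hnot : a ∉ lowerOp Δ Io x y := fun h => pred_ne_of_definedAtom hfresh h.1 ha
    simp only [mem_lowerOp, definedAtom_union_constBody, bodyVal_union_constBody_of_eq hfresh _ ha,
      hB _ _ combine_union_constBody_eqOn, Set.mem_union, hnot, Set.mem_ofPred_eq, ha]
    tauto
  · simp only [mem_lowerOp, definedAtom_union_constBody, bodyVal_union_constBody_of_ne _ ha,
      bodyVal_congr hfresh combine_union_constBody_eqOn, Set.mem_union, Set.mem_ofPred_eq, ha]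
    tauto

theorem upperOp_union_constBody (hfresh : Pt ∉ vocDef Δ) (hB : B.IndepOf Pt) :
    upperOp (Δ ∪ {Rule.constBody Pt B}) Io x y =
      upperOp Δ Io x y ∪ {a | a.pred = Pt ∧ TV.hi (B.eval (combine Δ Io x y))} := by
  ext a
  by_cases ha : a.pred = Pt
  · have hnot : a ∉ upperOp Δ Io x y := fun h => pred_ne_of_definedAtom hfresh h.1 ha
    simp only [mem_upperOp, definedAtom_union_constBody, bodyVal_union_constBody_of_eq hfresh _ ha,
      hB _ _ combine_union_constBody_eqOn, Set.mem_union, hnot, Set.mem_ofPred_eq, ha]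
    tauto
  · simp only [mem_upperOp, definedAtom_union_constBody, bodyVal_union_constBody_of_ne _ ha,
      bodyVal_congr hfresh combine_union_constBody_eqOn, Set.mem_union, Set.mem_ofPred_eq, ha]
    tauto

theorem stableLower_union_constBody (hfresh : Pt ∉ vocDef Δ) (hB : B.IndepOf Pt) :
    stableLower (Δ ∪ {Rule.constBody Pt B}) Io y = stableLower Δ Io y ∪
      {a | a.pred = Pt ∧ TV.lo (B.eval (combine Δ Io (stableLower Δ Io y) y))} := by
  apply Set.Subset.antisymm
  · refine stableLower_subset ?_
    rw [lowerOp_union_constBody hfresh hB,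
      combine_congr_definedAtom (mem_union_pred_iff hfresh _ _) (fun _ _ => Iff.rfl),
      lowerOp_congr_definedAtom (mem_union_pred_iff hfresh _ _) (fun _ _ => Iff.rfl),
      lowerOp_stableLower]
  · have hfix := lowerOp_stableLower (Δ := Δ ∪ {Rule.constBody Pt B}) (Io := Io) (y := y)
    rw [lowerOp_union_constBody hfresh hB] at hfix
    have hsub : stableLower Δ Io y ⊆ stableLower (Δ ∪ {Rule.constBody Pt B}) Io y :=
      stableLower_subset (Set.subset_union_left.trans hfix.subset)
    refine Set.union_subset hsub ?_
    rintro a ⟨ha, hlo⟩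
    exact hfix.subset
      (Or.inr ⟨ha, TV.lo_mono (Formula.eval_mono (combine_mono hsub subset_rfl) B) hlo⟩)

theorem stableUpper_union_constBody (hfresh : Pt ∉ vocDef Δ) (hB : B.IndepOf Pt) :
    stableUpper (Δ ∪ {Rule.constBody Pt B}) Io x = stableUpper Δ Io x ∪
      {a | a.pred = Pt ∧ TV.hi (B.eval (combine Δ Io x (stableUpper Δ Io x)))} := by
  apply Set.Subset.antisymm
  · refine stableUpper_subset ?_
    rw [upperOp_union_constBody hfresh hB,
      combine_congr_definedAtom (fun _ _ => Iff.rfl) (mem_union_pred_iff hfresh _ _),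
      upperOp_congr_definedAtom (fun _ _ => Iff.rfl) (mem_union_pred_iff hfresh _ _),
      upperOp_stableUpper]
  · have hfix := upperOp_stableUpper (Δ := Δ ∪ {Rule.constBody Pt B}) (Io := Io) (x := x)
    rw [upperOp_union_constBody hfresh hB] at hfix
    have hsub : stableUpper Δ Io x ⊆ stableUpper (Δ ∪ {Rule.constBody Pt B}) Io x :=
      stableUpper_subset (Set.subset_union_left.trans hfix.subset)
    refine Set.union_subset hsub ?_
    rintro a ⟨ha, hhi⟩
    exact hfix.subset
      (Or.inr ⟨ha, TV.hi_anti (Formula.eval_mono (combine_mono subset_rfl hsub) B) hhi⟩)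

theorem union_mem_wfPrefixpoints_union_constBody (hfresh : Pt ∉ vocDef Δ) (hB : B.IndepOf Pt) :
    (wfLower Δ Io ∪ {a | a.pred = Pt ∧ TV.lo (B.eval (wfModel Δ Io))},
      wfUpper Δ Io ∪ {a | a.pred = Pt ∧ TV.hi (B.eval (wfModel Δ Io))}) ∈
      wfPrefixpoints (Δ ∪ {Rule.constBody Pt B}) Io := by
  constructor
  · rw [stableLower_union_constBody hfresh hB, stableLower_congr (mem_union_pred_iff hfresh _ _),
      stableLower_wfUpper,
      combine_congr_definedAtom (fun _ _ => Iff.rfl) (mem_union_pred_iff hfresh _ _)]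
    rfl
  · rw [stableUpper_union_constBody hfresh hB, stableUpper_congr (mem_union_pred_iff hfresh _ _),
      stableUpper_wfLower,
      combine_congr_definedAtom (mem_union_pred_iff hfresh _ _) (fun _ _ => Iff.rfl)]
    rfl

theorem union_le_of_mem_wfPrefixpoints_union_constBody (hfresh : Pt ∉ vocDef Δ)
    (hB : B.IndepOf Pt) {p : Set (Atom σ D) × Set (Atom σ D)}
    (hp : p ∈ wfPrefixpoints (Δ ∪ {Rule.constBody Pt B}) Io) :
    wfLower Δ Io ∪ {a | a.pred = Pt ∧ TV.lo (B.eval (wfModel Δ Io))} ⊆ p.1 ∧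
      p.2 ⊆ wfUpper Δ Io ∪ {a | a.pred = Pt ∧ TV.hi (B.eval (wfModel Δ Io))} := by
  obtain ⟨x, y⟩ := p
  obtain ⟨hx, hy⟩ := hp
  rw [stableLower_union_constBody hfresh hB] at hx
  rw [stableUpper_union_constBody hfresh hB] at hy
  -- Dropping the `Pt`-atoms from `y` gives a prefixpoint for `Δ` alone.
  set y₀ := {a ∈ y | a.pred ≠ Pt}
  have hy₀ : ∀ a, definedAtom Δ a → (a ∈ y₀ ↔ a ∈ y) :=
    fun _ ha => and_iff_left (pred_ne_of_definedAtom hfresh ha)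
  have hp₀ : (x, y₀) ∈ wfPrefixpoints Δ Io :=
    ⟨(stableLower_congr hy₀).trans_subset (Set.subset_union_left.trans hx),
      fun a ha => (hy ha.1).resolve_right fun h => ha.2 h.1⟩
  have hlow : wfLower Δ Io ⊆ x := wfLower_subset hp₀
  have hup : y₀ ⊆ wfUpper Δ Io := subset_wfUpper hp₀
  have hexp_low : ExpandsS (wfModel Δ Io) (combine Δ Io (stableLower Δ Io y) y) := by
    rw [← stableLower_congr hy₀, ← combine_congr_definedAtom (fun _ _ => Iff.rfl) hy₀]
    exact combine_mono (stableLower_wfUpper (Δ := Δ) ▸ stableLower_anti hup) hup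
  have hexp_up : ExpandsS (wfModel Δ Io) (combine Δ Io x (stableUpper Δ Io x)) :=
    combine_mono hlow (stableUpper_wfLower (Δ := Δ) ▸ stableUpper_anti hlow)
  refine ⟨Set.union_subset hlow ?_, fun a hay => ?_⟩
  · rintro a ⟨ha, hlo⟩
    exact hx (Or.inr ⟨ha, TV.lo_mono (Formula.eval_mono hexp_low B) hlo⟩)
  · by_cases ha : a.pred = Pt
    · obtain h | ⟨-, hhi⟩ := hy hay
      · exact absurd ha (pred_ne_of_definedAtom hfresh (stableUpper_subset_definedAtom h))
      · exact Or.inr ⟨ha, TV.hi_anti (Formula.eval_mono hexp_up B) hhi⟩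
    · exact Or.inl (hup ⟨hay, ha⟩)

theorem wf_union_constBody (hfresh : Pt ∉ vocDef Δ) (hB : B.IndepOf Pt) :
    wfLower (Δ ∪ {Rule.constBody Pt B}) Io =
        wfLower Δ Io ∪ {a | a.pred = Pt ∧ TV.lo (B.eval (wfModel Δ Io))} ∧
      wfUpper (Δ ∪ {Rule.constBody Pt B}) Io =
        wfUpper Δ Io ∪ {a | a.pred = Pt ∧ TV.hi (B.eval (wfModel Δ Io))} :=
  wf_eq_of_isLeast (union_mem_wfPrefixpoints_union_constBody hfresh hB)
    fun _ => union_le_of_mem_wfPrefixpoints_union_constBody hfresh hB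

theorem wfModel_union_constBody_of_ne (hfresh : Pt ∉ vocDef Δ) (hB : B.IndepOf Pt)
    (ha : a.pred ≠ Pt) : wfModel (Δ ∪ {Rule.constBody Pt B}) Io a = wfModel Δ Io a := by
  obtain ⟨hl, hu⟩ := wf_union_constBody (Io := Io) hfresh hB
  rw [wfModel, combine_union_constBody_eqOn ha, hl, hu,
    combine_congr_definedAtom (mem_union_pred_iff hfresh _ _) (mem_union_pred_iff hfresh _ _)]
  rfl

theorem wfModel_union_constBody_of_eq (hfresh : Pt ∉ vocDef Δ) (hB : B.IndepOf Pt)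
    (ha : a.pred = Pt) : wfModel (Δ ∪ {Rule.constBody Pt B}) Io a = B.eval (wfModel Δ Io) := by
  obtain ⟨hl, hu⟩ := wf_union_constBody (Io := Io) hfresh hB
  have hdef : definedAtom (Δ ∪ {Rule.constBody Pt B}) a := definedAtom_union_constBody.2 (Or.inr ha)
  have hndef : ¬ definedAtom Δ a := fun h => pred_ne_of_definedAtom hfresh h ha
  apply TV.ext_lo_hi <;> rw [Bool.eq_iff_iff, wfModel]
  · rw [lo_combine hdef, hl]
    exact (or_iff_right fun h => hndef (wfLower_subset_definedAtom h)).trans (and_iff_right ha)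
  · rw [hi_combine hdef, hu]
    exact (or_iff_right fun h => hndef (wfUpper_subset_definedAtom h)).trans (and_iff_right ha)

end UnionConstBody

open Classical in
noncomputable def Struct.updatePred (M : Struct σ D) (P : σ.Pred) (v : TV) : Struct σ D :=
  fun a => if a.pred = P then v else M a

section Models

variable {s : Set σ.Pred} {φs : List (Formula σ D)} {Δ : Defn σ D} {Pt : σ.Pred}
  {B : Formula σ D} {M N : Struct σ D} {pt : Atom σ D}

theorem expandsS_updatePred {P : σ.Pred} {v : TV} (h : ∀ a : Atom σ D, a.pred = P → M a = TV.u) :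
    ExpandsS M (M.updatePred P v) := by
  intro a
  unfold Struct.updatePred
  split_ifs with ha
  · exact Or.inr (Or.inl (h a ha))
  · exact TV.precLe_refl _

theorem wfModel_eq_of_isModelOfTOn (hΔs : vocDef Δ ⊆ s) (hM : IsModelOfTOn s M φs Δ) :
    wfModel Δ M = M := by
  funext a
  by_cases ha : a.pred ∈ s
  · exact (hM.2.2.2 a ha).symm
  · exact wfModel_of_not_definedAtom fun hd => ha (hΔs (pred_mem_vocDef hd))

theorem isModelOfCanonOn_updatePred (hfresh : Pt ∉ vocDef Δ) (hΔs : vocDef Δ ⊆ s)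
    (hB : B.IndepOf Pt) (hBφ : ∀ I, B.eval I = TV.t ↔ ∀ φ ∈ φs, φ.eval I = TV.t)
    (hM : IsModelOfTOn s M φs Δ) (hpt : pt.pred = Pt) :
    IsModelOfCanonOn (insert Pt s) (M.updatePred Pt TV.t) pt (Δ ∪ {Rule.constBody Pt B}) := by
  have hoff : Set.EqOn (M.updatePred Pt TV.t) M {a | a.pred ≠ Pt} := fun _ ha => if_neg ha
  have hwf : Set.EqOn (wfModel Δ (M.updatePred Pt TV.t)) M {a | a.pred ≠ Pt} :=
    fun a ha =>
      (wfModel_congr hfresh hoff ha).trans (congrFun (wfModel_eq_of_isModelOfTOn hΔs hM) a)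
  refine ⟨fun a ha => ?_, fun a ha => ?_, if_pos hpt, fun a ha => ?_⟩
  · by_cases hP : a.pred = Pt
    · exact Or.inl (if_pos hP)
    · rw [hoff hP]
      exact hM.1 a (ha.resolve_left hP)
  · have hP : a.pred ≠ Pt := fun h => ha (Or.inl h)
    rw [hoff hP]
    exact hM.2.1 a fun h => ha (Or.inr h)
  · by_cases hP : a.pred = Pt
    · rw [wfModel_union_constBody_of_eq hfresh hB hP, hB _ _ hwf, (hBφ M).2 hM.2.2.1]
      exact if_pos hP
    · rw [wfModel_union_constBody_of_ne hfresh hB hP, hwf hP]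
      exact hoff hP

theorem eq_updatePred_of_isModelOfCanonOn (hfresh : Pt ∉ vocDef Δ) (hB : B.IndepOf Pt)
    (hM : IsModelOfTOn s M φs Δ)
    (hN : IsModelOfCanonOn (insert Pt s) N pt (Δ ∪ {Rule.constBody Pt B}))
    (hpt : pt.pred = Pt) (hMN : ExpandsS M N) : N = M.updatePred Pt TV.t := by
  funext a
  unfold Struct.updatePred
  split_ifs with hP
  -- every `Pt`-atom takes the value of the body, in particular the value of `pt`
  · rw [hN.2.2.2 a (Or.inl hP), wfModel_union_constBody_of_eq hfresh hB hP,
      ← wfModel_union_constBody_of_eq hfresh hB hpt, ← hN.2.2.2 pt (Or.inl hpt), hN.2.2.1]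
  · by_cases ha : a.pred ∈ s
    · exact TV.eq_of_precLe_of_two_valued (hM.1 a ha) (hN.1 a (Or.inr ha)) (hMN a)
    · rw [hN.2.1 a (by rintro (h | h) <;> contradiction), hM.2.1 a ha]

theorem isModelOfTOn_restrictP (hfresh : Pt ∉ vocDef Δ) (hΔs : vocDef Δ ⊆ s) (hs : Pt ∉ s)
    (hφs : ∀ φ ∈ φs, Pt ∉ φ.preds) (hB : B.IndepOf Pt)
    (hBφ : ∀ I, B.eval I = TV.t ↔ ∀ φ ∈ φs, φ.eval I = TV.t)
    (hM : IsModelOfCanonOn (insert Pt s) M pt (Δ ∪ {Rule.constBody Pt B}))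
    (hpt : pt.pred = Pt) :
    IsModelOfTOn s (restrictP s M) φs Δ := by
  have hres : Set.EqOn (restrictP s M) M {a | a.pred ≠ Pt} := by
    intro a hP
    by_cases ha : a.pred ∈ s
    · exact if_pos ha
    · rw [restrictP, if_neg ha, hM.2.1 a (by rintro (h | h) <;> contradiction)]
  have hwf : Set.EqOn (wfModel Δ M) M {a | a.pred ≠ Pt} := by
    intro a hP
    by_cases ha : a.pred ∈ s
    · rw [hM.2.2.2 a (Or.inr ha), wfModel_union_constBody_of_ne hfresh hB hP]
    · exact wfModel_of_not_definedAtom fun hd => ha (hΔs (pred_mem_vocDef hd))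
  have hBt : B.eval (wfModel Δ M) = TV.t := by
    rw [← wfModel_union_constBody_of_eq hfresh hB hpt, ← hM.2.2.2 pt (Or.inl hpt), hM.2.2.1]
  refine ⟨fun a ha => ?_, fun a ha => if_neg ha, fun φ hφ => ?_, fun a ha => ?_⟩
  · rw [restrictP, if_pos ha]
    exact hM.1 a (Or.inr ha)
  · rw [Formula.indepOf_of_not_mem_preds (hφs φ hφ) _ _ (hres.trans hwf.symm)]
    exact (hBφ _).1 hBt φ hφ
  · have hP : a.pred ≠ Pt := fun h => hs (h ▸ ha)
    rw [wfModel_congr hfresh hres hP, hwf hP]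
    exact hres hP

end Models

theorem reduction_to_canonical_general (σ : Voc) (D : Type)
    (φs : List (Formula σ D)) (Δ : Defn σ D)
    (Pt : σ.Pred) (hPt : σ.arity Pt = 0)
    (hfresh₁ : ∀ φ ∈ φs, Pt ∉ φ.preds)
    (hfresh₂ : Pt ∉ vocDef Δ) :
    let vocT : Set σ.Pred := vocDef Δ ∪ { P | ∃ φ ∈ φs, P ∈ φ.preds }
    let ptA : Atom σ D := ptAtom σ D Pt hPt
    let ptRule : Rule σ D :=
      ⟨Pt, Set.univ,
        fun _ => φs.foldr Formula.and (Formula.all ∅ (fun _ => Formula.atom ptA))⟩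
    let Δ' : Defn σ D := Δ ∪ {ptRule}
    (∀ M : Struct σ D, IsModelOfTOn vocT M φs Δ →
        ∃! M' : Struct σ D, IsModelOfCanonOn (insert Pt vocT) M' ptA Δ' ∧
          ExpandsS M M') ∧
    (∀ M' : Struct σ D, IsModelOfCanonOn (insert Pt vocT) M' ptA Δ' →
        IsModelOfTOn vocT (restrictP vocT M') φs Δ) := by
  intro vocT ptA ptRule Δ'
  have hs : Pt ∉ vocT := fun h => h.elim hfresh₂ fun ⟨φ, hφ, hP⟩ => hfresh₁ φ hφ hP
  have hΔs : vocDef Δ ⊆ vocT := Set.subset_union_left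
  set B := φs.foldr Formula.and (Formula.all ∅ fun _ => Formula.atom ptA)
  have hB : B.IndepOf Pt := Formula.indepOf_foldr_and (Formula.indepOf_all_empty _)
    fun φ hφ => Formula.indepOf_of_not_mem_preds (hfresh₁ φ hφ)
  have hBφ (I : Struct σ D) : B.eval I = TV.t ↔ ∀ φ ∈ φs, φ.eval I = TV.t :=
    Formula.eval_foldr_and_eq_t_iff (fun _ => Formula.eval_all_empty _) φs
  have hpt : ptA.pred = Pt := rfl
  refine ⟨fun M hM => ⟨M.updatePred Pt TV.t, ⟨?_, ?_⟩, fun N hN => ?_⟩, fun M' hM' => ?_⟩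
  · exact isModelOfCanonOn_updatePred hfresh₂ hΔs hB hBφ hM hpt
  · exact expandsS_updatePred fun a ha => hM.2.1 a (ha ▸ hs)
  · exact eq_updatePred_of_isModelOfCanonOn hfresh₂ hB hM hN.1 hpt hN.2
  · exact isModelOfTOn_restrictP hfresh₂ hΔs hs hfresh₁ hB hBφ hM' hpt

/-- Reduction to canonical form: a theory `{φ₁, …, φₙ, Δ}` is strongly
`voc(T)`-equivalent to the canonical theory `{P_t, Δ ∪ {P_t ← φ₁ ∧ … ∧ φₙ}}` where
`P_t` is a fresh 0-ary symbol: every model of `T` expands uniquely to a model of the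
canonical theory, and every model of the canonical theory restricted to `voc(T)` is a
model of `T`. -/
theorem reduction_to_canonical (σ : Voc) (D : Type) [Nonempty D]
    (φs : List (Formula σ D)) (Δ : Defn σ D) (hΔ : WellFormed Δ)
    (Pt : σ.Pred) (hPt : σ.arity Pt = 0)
    (hfresh₁ : ∀ φ ∈ φs, Pt ∉ φ.preds)
    (hfresh₂ : Pt ∉ vocDef Δ) :
    let vocT : Set σ.Pred := vocDef Δ ∪ { P | ∃ φ ∈ φs, P ∈ φ.preds }
    let ptA : Atom σ D := ptAtom σ D Pt hPt
    let ptRule : Rule σ D :=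
      ⟨Pt, Set.univ,
        fun _ => φs.foldr Formula.and (Formula.all ∅ (fun _ => Formula.atom ptA))⟩
    let Δ' : Defn σ D := Δ ∪ {ptRule}
    (∀ M : Struct σ D, IsModelOfTOn vocT M φs Δ →
        ∃! M' : Struct σ D, IsModelOfCanonOn (insert Pt vocT) M' ptA Δ' ∧
          ExpandsS M M') ∧
    (∀ M' : Struct σ D, IsModelOfCanonOn (insert Pt vocT) M' ptA Δ' →
        IsModelOfTOn vocT (restrictP vocT M') φs Δ) :=
  reduction_to_canonical_general σ D φs Δ Pt hPt hfresh₁ hfresh₂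

end LazyMX
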